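/- arXiv:2007.12762 — 3 statements merged into one kernel-verified Lean document; each statement's English description precedes it below -/
import Mathlib

section
/- Let X and Y be strings over an alphabet Σ and let k ≥ 0 be an integer. Suppose d'_0,…,d'_{k+1} and d_0,…,d_k are natural numbers satisfying: d'_0 = 0; for each i ∈ [0..k], max_{δ=−k}^{k} LCE_0^{X,Y}(d'_i, d'_i+δ) ≤ d_i − d'_i ≤ max_{δ=−k}^{k} LCE_k^{X,Y}(d'_i, d'_i+δ); and d'_{i+1} = min(|X|, d_i + 1) for each i ∈ [0..k]. Then: (1) if ED(X,Y) ≤ k, then ||X| − |Y|| ≤ k and d_k = |X|; and (2) if ||X| − |Y|| ≤ k and d_k = |X|, then ED(X,Y) ≤ (3k+5)·k. -/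
/-- Hamming distance (number of mismatching positions) between two strings. -/
def HD {α : Type*} [DecidableEq α] (X Y : List α) : ℕ :=
  ((X.zip Y).filter fun p => p.1 ≠ p.2).length

/-- `LCE k X Y x y` is the largest `ℓ` with `HD (X[x..x+ℓ)) (Y[y..y+ℓ)) ≤ k`
(in particular `ℓ ≤ min (|X|-x) (|Y|-y)`) when `0 ≤ x ≤ |X|` and `0 ≤ y ≤ |Y|`,
and `0` otherwise. -/
def LCE {α : Type*} [DecidableEq α] (k : ℕ) (X Y : List α) (x y : ℤ) : ℕ :=
  if 0 ≤ x ∧ x ≤ X.length ∧ 0 ≤ y ∧ y ≤ Y.length then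
    Nat.findGreatest
      (fun ℓ => ℓ ≤ X.length - x.toNat ∧ ℓ ≤ Y.length - y.toNat ∧
        HD ((X.drop x.toNat).take ℓ) ((Y.drop y.toNat).take ℓ) ≤ k)
      (min (X.length - x.toNat) (Y.length - y.toNat))
  else 0

/-- The cost structure of Mathlib's former `Levenshtein.Cost` (removed from Mathlib). -/
structure Levenshtein.Cost (α β δ : Type*) where
  delete : α → δ
  insert : β → δ
  substitute : α → β → δ

/-- Mathlib's former `Levenshtein.defaultCost`: unit costs, free matching substitution. -/
def Levenshtein.defaultCost {α : Type*} [DecidableEq α] : Levenshtein.Cost α α ℕ where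
  delete _ := 1
  insert _ := 1
  substitute a b := if a = b then 0 else 1

/-- Mathlib's former `levenshtein`, given by its characterizing recursion
(`levenshtein_nil_nil`, `levenshtein_nil_cons`, `levenshtein_cons_nil`, `levenshtein_cons_cons`). -/
def levenshtein {α β δ : Type*} [AddZeroClass δ] [Min δ] (C : Levenshtein.Cost α β δ) :
    List α → List β → δ
  | [], [] => 0
  | [], y :: ys => C.insert y + levenshtein C [] ys
  | x :: xs, [] => C.delete x + levenshtein C xs []
  | x :: xs, y :: ys =>
    min (C.delete x + levenshtein C xs (y :: ys))
      (min (C.insert y + levenshtein C (x :: xs) ys) (C.substitute x y + levenshtein C xs ys))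
termination_by xs ys => xs.length + ys.length

/-- Edit (Levenshtein) distance. -/
def ED {α : Type*} [DecidableEq α] (X Y : List α) : ℕ :=
  levenshtein Levenshtein.defaultCost X Y

namespace EDaux
variable {α : Type*} [DecidableEq α]

lemma ed_nil_right (s : List α) : ED s [] = s.length := by
  induction s with
  | nil => simp [ED, levenshtein]
  | cons a s ih => simp [ED, levenshtein, Levenshtein.defaultCost] at ih ⊢; omega

lemma ed_nil_left (t : List α) : ED [] t = t.length := by
  induction t with
  | nil => simp [ED, levenshtein]
  | cons a t ih => simp [ED, levenshtein, Levenshtein.defaultCost] at ih ⊢; omega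

lemma ed_cons_cons (x y : α) (s t : List α) :
    ED (x :: s) (y :: t) =
      min (1 + ED s (y :: t)) (min (1 + ED (x :: s) t)
        ((if x = y then 0 else 1) + ED s t)) := by
  simp [ED, levenshtein, Levenshtein.defaultCost]

lemma ed_del (x : α) (s t : List α) : ED (x :: s) t ≤ 1 + ED s t := by
  cases t with
  | nil => rw [ed_nil_right, ed_nil_right]; simp [List.length_cons]
  | cons y t => rw [ed_cons_cons]; exact min_le_left _ _

lemma ed_ins (y : α) (s t : List α) : ED s (y :: t) ≤ 1 + ED s t := by
  cases s with
  | nil => rw [ed_nil_left, ed_nil_left]; simp [List.length_cons]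
  | cons x s => rw [ed_cons_cons]; exact le_trans (min_le_right _ _) (min_le_left _ _)

lemma ed_sub (x y : α) (s t : List α) :
    ED (x :: s) (y :: t) ≤ (if x = y then 0 else 1) + ED s t := by
  rw [ed_cons_cons]; exact le_trans (min_le_right _ _) (min_le_right _ _)

lemma ed_unins (y : α) (s t : List α) : ED s t ≤ 1 + ED s (y :: t) := by
  induction s generalizing y t with
  | nil => rw [ed_nil_left, ed_nil_left]; simp [List.length_cons]; omega
  | cons x s ih =>
    rw [ed_cons_cons]
    have h1 := ed_del x s t
    have h2 := ih (t := t) (y := y)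
    split <;> omega

lemma ed_drop_prefix (s t C : List α) : ED s t ≤ C.length + ED s (C ++ t) := by
  induction C with
  | nil => simp
  | cons c C ih =>
    calc ED s t ≤ C.length + ED s (C ++ t) := ih
      _ ≤ C.length + (1 + ED s (c :: (C ++ t))) := by
          have := ed_unins c s (C ++ t); omega
      _ = (c :: C).length + ED s ((c :: C) ++ t) := by simp; omega

lemma ed_ins_prefix (s t C : List α) : ED s (C ++ t) ≤ C.length + ED s t := by
  induction C with
  | nil => simp
  | cons c C ih =>
    calc ED s (c :: (C ++ t)) ≤ 1 + ED s (C ++ t) := ed_ins _ _ _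
      _ ≤ 1 + (C.length + ED s t) := by omega
      _ = (c :: C).length + ED s t := by simp [List.length_cons]; omega

lemma ed_del_prefix (s B D : List α) : ED (s ++ B) D ≤ s.length + ED B D := by
  induction s with
  | nil => simp
  | cons a s ih =>
    calc ED (a :: (s ++ B)) D ≤ 1 + ED (s ++ B) D := ed_del _ _ _
      _ ≤ 1 + (s.length + ED B D) := by omega
      _ = (a :: s).length + ED B D := by simp [List.length_cons]; omega

lemma ed_append (A B C D : List α) : ED (A ++ B) (C ++ D) ≤ ED A C + ED B D := by
  induction A generalizing C with
  | nil =>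
    simp only [List.nil_append]
    rw [ed_nil_left]
    exact ed_ins_prefix B D C
  | cons a A ihA =>
    induction C with
    | nil =>
      rw [ed_nil_right]
      simpa [List.length_cons] using ed_del_prefix (a :: A) B D
    | cons c C ihC =>
      have h1 := ihA (c :: C)
      have h3 := ihA C
      have h2 := ihC
      simp only [List.cons_append] at *
      rw [ed_cons_cons]
      rw [ed_cons_cons a c A C]
      split <;> omega

lemma ed_cut (A B Y : List α) :
    ∃ C D, Y = C ++ D ∧ ED A C + ED B D ≤ ED (A ++ B) Y := by
  induction A generalizing Y with
  | nil =>
    exact ⟨[], Y, rfl, by rw [ed_nil_left]; simp⟩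
  | cons a A ihA =>
    induction Y with
    | nil =>
      refine ⟨[], [], rfl, ?_⟩
      rw [ed_nil_right, ed_nil_right, ed_nil_right]
      simp [List.length_append, List.length_cons]
      omega
    | cons y Y ihY =>
      simp only [List.cons_append] at *
      rcases ihA (y :: Y) with ⟨C1, D1, hY1, h1⟩
      rcases ihY with ⟨C2, D2, hY2, h2⟩
      rcases ihA Y with ⟨C3, D3, hY3, h3⟩
      have hdel := ed_del a A C1
      have hins := ed_ins y (a :: A) C2
      have hsub := ed_sub a y A C3
      rw [ed_cons_cons]
      set cst := (if a = y then 0 else 1) with hcst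
      rcases le_total (1 + ED (A ++ B) (y :: Y))
          (min (1 + ED (a :: (A ++ B)) Y) (cst + ED (A ++ B) Y)) with hc | hc
      · exact ⟨C1, D1, hY1, by omega⟩
      · rcases le_total (1 + ED (a :: (A ++ B)) Y) (cst + ED (A ++ B) Y) with hc2 | hc2
        · exact ⟨y :: C2, D2, by rw [hY2, List.cons_append], by omega⟩
        · exact ⟨y :: C3, D3, by rw [hY3, List.cons_append], by omega⟩

lemma eq_of_ed_eq_zero {s t : List α} (h : ED s t = 0) : s = t := by
  induction s generalizing t with
  | nil =>
    rw [ed_nil_left] at h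
    exact (List.eq_nil_of_length_eq_zero h).symm
  | cons a s ih =>
    cases t with
    | nil => rw [ed_nil_right] at h; simp at h
    | cons y t =>
      rw [ed_cons_cons] at h
      rcases eq_or_ne a y with hay | hay
      · simp only [if_pos hay] at h
        have h0 : ED s t = 0 := by omega
        rw [hay, ih h0]
      · simp only [if_neg hay] at h
        omega

lemma len_le_ed (s t : List α) :
    s.length ≤ ED s t + t.length ∧ t.length ≤ ED s t + s.length := by
  induction s generalizing t with
  | nil => rw [ed_nil_left]; simp
  | cons a s ih =>
    induction t with
    | nil => rw [ed_nil_right]; simp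
    | cons y t ihY =>
      rw [ed_cons_cons]
      have h1 := ih (y :: t)
      have h2 := ih t
      simp only [List.length_cons] at *
      rcases eq_or_ne a y with hay | hay
      · simp only [if_pos hay]; omega
      · simp only [if_neg hay]; omega

lemma ed_le_sum_len (s t : List α) : ED s t ≤ s.length + t.length := by
  induction s generalizing t with
  | nil => rw [ed_nil_left]; omega
  | cons a s ih =>
    cases t with
    | nil => rw [ed_nil_right]; simp
    | cons y t =>
      have h := ih (t := t)
      have := ed_sub a y s t
      simp only [List.length_cons]
      split at this <;> omega

lemma hd_cons (a y : α) (s t : List α) :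
    HD (a :: s) (y :: t) = (if a = y then 0 else 1) + HD s t := by
  simp only [HD, List.zip_cons_cons, List.filter_cons]
  split <;> rename_i h
  · simp only [ne_eq, decide_eq_true_eq] at h
    simp only [List.length_cons, if_neg (by simpa using h)]
    omega
  · simp only [ne_eq, decide_eq_true_eq, not_not] at h
    simp [if_pos (by simpa using h)]

lemma ed_le_hd (s t : List α) (hlen : s.length = t.length) : ED s t ≤ HD s t := by
  induction s generalizing t with
  | nil =>
    cases t with
    | nil => simp [ED, HD, levenshtein]
    | cons y t => simp at hlen
  | cons a s ih =>
    cases t with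
    | nil => simp at hlen
    | cons y t =>
      have := ed_sub a y s t
      rw [hd_cons]
      have := ih (t := t) (by simpa using hlen)
      omega

lemma hd_self (s : List α) : HD s s = 0 := by
  induction s with
  | nil => simp [HD]
  | cons a s ih => rw [hd_cons]; simp [ih]

lemma hd_take_le (s t : List α) (n : ℕ) : HD (s.take n) (t.take n) ≤ HD s t := by
  induction s generalizing t n with
  | nil => simp [HD]
  | cons a s ih =>
    cases t with
    | nil => simp [HD]
    | cons y t =>
      cases n with
      | zero => simp [HD]
      | succ n =>
        simp only [List.take_succ_cons]
        rw [hd_cons, hd_cons]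
        have := ih (t := t) (n := n)
        omega

end EDaux

namespace EDaux2
open EDaux
variable {α : Type*} [DecidableEq α]

lemma ed_le_max (s t : List α) : ED s t ≤ max s.length t.length := by
  induction s generalizing t with
  | nil => rw [ed_nil_left]; omega
  | cons a s ih =>
    cases t with
    | nil => rw [ed_nil_right]; omega
    | cons y t =>
      have h := ih (t := t)
      have hs := ed_sub a y s t
      simp only [List.length_cons]
      rcases eq_or_ne a y with hay | hay
      · simp only [if_pos hay] at hs; omega
      · simp only [if_neg hay] at hs; omega

lemma seg_split (l : List α) {a b c : ℕ} (hab : a ≤ b) (hbc : b ≤ c) :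
    (l.drop a).take (b - a) ++ (l.drop b).take (c - b) = (l.drop a).take (c - a) := by
  have h1 : c - a = (b - a) + (c - b) := by omega
  have h2 : l.drop b = (l.drop a).drop (b - a) := by
    rw [List.drop_drop]
    congr 1
    omega
  rw [h1, List.take_add, h2]

lemma take_split (l : List α) {a b : ℕ} (hab : a ≤ b) :
    l.take b = l.take a ++ (l.drop a).take (b - a) := by
  have := seg_split l (a := 0) (b := a) (c := b) (by omega) hab
  simpa using this.symm

lemma lce_cond (X Y : List α) (x y : ℕ) (hx : x ≤ X.length) (hy : y ≤ Y.length) :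
    0 ≤ (x : ℤ) ∧ (x : ℤ) ≤ X.length ∧ 0 ≤ (y : ℤ) ∧ (y : ℤ) ≤ Y.length :=
  ⟨by positivity, by exact_mod_cast hx, by positivity, by exact_mod_cast hy⟩

lemma lce_spec (k' : ℕ) (X Y : List α) (x y : ℕ) (hx : x ≤ X.length) (hy : y ≤ Y.length) :
    LCE k' X Y x y ≤ X.length - x ∧ LCE k' X Y x y ≤ Y.length - y ∧
      HD ((X.drop x).take (LCE k' X Y x y)) ((Y.drop y).take (LCE k' X Y x y)) ≤ k' := by
  have hrw : LCE k' X Y (x : ℤ) (y : ℤ) = Nat.findGreatest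
      (fun ℓ => ℓ ≤ X.length - x ∧ ℓ ≤ Y.length - y ∧
        HD ((X.drop x).take ℓ) ((Y.drop y).take ℓ) ≤ k')
      (min (X.length - x) (Y.length - y)) := by
    unfold LCE
    rw [if_pos (lce_cond X Y x y hx hy)]
    simp only [Int.toNat_natCast]
  have hs := Nat.findGreatest_spec
      (P := fun ℓ => ℓ ≤ X.length - x ∧ ℓ ≤ Y.length - y ∧
        HD ((X.drop x).take ℓ) ((Y.drop y).take ℓ) ≤ k')
      (n := min (X.length - x) (Y.length - y)) (m := 0) (Nat.zero_le _)
      ⟨Nat.zero_le _, Nat.zero_le _, by simp [HD]⟩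
  rw [hrw]
  exact hs

lemma le_lce (k' : ℕ) (X Y : List α) (x y ℓ : ℕ) (hx : x ≤ X.length) (hy : y ≤ Y.length)
    (h1 : ℓ ≤ X.length - x) (h2 : ℓ ≤ Y.length - y)
    (h3 : HD ((X.drop x).take ℓ) ((Y.drop y).take ℓ) ≤ k') :
    ℓ ≤ LCE k' X Y x y := by
  have hrw : LCE k' X Y (x : ℤ) (y : ℤ) = Nat.findGreatest
      (fun ℓ => ℓ ≤ X.length - x ∧ ℓ ≤ Y.length - y ∧
        HD ((X.drop x).take ℓ) ((Y.drop y).take ℓ) ≤ k')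
      (min (X.length - x) (Y.length - y)) := by
    unfold LCE
    rw [if_pos (lce_cond X Y x y hx hy)]
    simp only [Int.toNat_natCast]
  rw [hrw]
  exact Nat.le_findGreatest (le_min h1 h2) ⟨h1, h2, h3⟩

lemma lce_le (k' : ℕ) (X Y : List α) (x : ℕ) (y : ℤ) :
    LCE k' X Y x y ≤ X.length - x := by
  unfold LCE
  split
  · refine le_trans (Nat.findGreatest_le _) ?_
    simp only [Int.toNat_natCast]
    exact min_le_left _ _
  · omega

end EDaux2

section Main
open EDaux EDaux2
variable {α : Type*} [DecidableEq α]

lemma sup_lce_le (X Y : List α) (k k' : ℕ) (x : ℕ) :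
    (Finset.Icc (-(k:ℤ)) (k:ℤ)).sup (fun δ => LCE k' X Y (x:ℤ) ((x:ℤ) + δ)) ≤ X.length - x :=
  Finset.sup_le fun _ _ => lce_le k' X Y x _

lemma F1 (X : List α) (k : ℕ) (d' d : ℕ → ℕ) (h0 : d' 0 = 0)
    (hstep : ∀ i ≤ k, d' (i + 1) = min X.length (d i + 1)) :
    ∀ i, i ≤ k + 1 → d' i ≤ X.length := by
  intro i hi
  cases i with
  | zero => rw [h0]; exact Nat.zero_le _
  | succ j => rw [hstep j (by omega)]; exact min_le_left _ _

lemma F3 (X Y : List α) (k : ℕ) (d' d : ℕ → ℕ)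
    (hlow : ∀ i ≤ k,
      d' i + (Finset.Icc (-(k : ℤ)) (k : ℤ)).sup
        (fun δ => LCE 0 X Y (d' i) ((d' i : ℤ) + δ)) ≤ d i) :
    ∀ i, i ≤ k → d' i ≤ d i := by
  intro i hi
  exact le_trans (Nat.le_add_right _ _) (hlow i hi)

lemma F2 (X Y : List α) (k : ℕ) (d' d : ℕ → ℕ) (h0 : d' 0 = 0)
    (hhigh : ∀ i ≤ k,
      d i ≤ d' i + (Finset.Icc (-(k : ℤ)) (k : ℤ)).sup
        (fun δ => LCE k X Y (d' i) ((d' i : ℤ) + δ)))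
    (hstep : ∀ i ≤ k, d' (i + 1) = min X.length (d i + 1)) :
    ∀ i, i ≤ k → d i ≤ X.length := by
  intro i hi
  have h1 := hhigh i hi
  have h2 := sup_lce_le X Y k k (d' i)
  have h3 := F1 X k d' d h0 hstep i (by omega)
  omega

lemma Hfin (X Y : List α) (k : ℕ) (d' d : ℕ → ℕ) (h0 : d' 0 = 0)
    (hlow : ∀ i ≤ k,
      d' i + (Finset.Icc (-(k : ℤ)) (k : ℤ)).sup
        (fun δ => LCE 0 X Y (d' i) ((d' i : ℤ) + δ)) ≤ d i)
    (hhigh : ∀ i ≤ k,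
      d i ≤ d' i + (Finset.Icc (-(k : ℤ)) (k : ℤ)).sup
        (fun δ => LCE k X Y (d' i) ((d' i : ℤ) + δ)))
    (hstep : ∀ i ≤ k, d' (i + 1) = min X.length (d i + 1)) :
    ∀ i, i ≤ k → d i = X.length → d k = X.length := by
  have aux : ∀ j i, i + j ≤ k → d i = X.length → d (i + j) = X.length := by
    intro j
    induction j with
    | zero => intro i _ h; simpa using h
    | succ j ih =>
      intro i hij hdi
      have hd'1 : d' (i+1) = X.length := by
        rw [hstep i (by omega), hdi]
        omega
      have hup : d (i+1) ≤ X.length := F2 X Y k d' d h0 hhigh hstep (i+1) (by omega)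
      have hlo : d' (i+1) ≤ d (i+1) := F3 X Y k d' d hlow (i+1) (by omega)
      have hdi1 : d (i+1) = X.length := by omega
      have := ih (i+1) (by omega) hdi1
      convert this using 2
      omega
  intro i hi hdi
  have := aux (k - i) i (by omega) hdi
  convert this using 2
  omega

end Main
section Part1
open EDaux EDaux2
variable {α : Type*} [DecidableEq α]

lemma part1 (X Y : List α) (k : ℕ) (d' d : ℕ → ℕ) (h0 : d' 0 = 0)
    (hlow : ∀ i ≤ k,
      d' i + (Finset.Icc (-(k : ℤ)) (k : ℤ)).sup
        (fun δ => LCE 0 X Y (d' i) ((d' i : ℤ) + δ)) ≤ d i)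
    (hhigh : ∀ i ≤ k,
      d i ≤ d' i + (Finset.Icc (-(k : ℤ)) (k : ℤ)).sup
        (fun δ => LCE k X Y (d' i) ((d' i : ℤ) + δ)))
    (hstep : ∀ i ≤ k, d' (i + 1) = min X.length (d i + 1))
    (hED : ED X Y ≤ k) :
    |(X.length : ℤ) - (Y.length : ℤ)| ≤ k ∧ d k = X.length := by
  have hlen := len_le_ed X Y
  have habs : |(X.length : ℤ) - (Y.length : ℤ)| ≤ k := by
    rw [abs_le]; constructor <;> push_cast <;> omega
  refine ⟨habs, ?_⟩
  have inv : ∀ i, i ≤ k → d k = X.length ∨ ∃ y r : ℕ, y ≤ Y.length ∧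
      ED (X.drop (d' i)) (Y.drop y) ≤ r ∧ r + i ≤ ED X Y ∧
      (y : ℤ) - (d' i : ℤ) + r ≤ ED X Y ∧ (d' i : ℤ) - (y : ℤ) + r ≤ ED X Y := by
    intro i
    induction i with
    | zero =>
      intro _
      right
      refine ⟨0, ED X Y, Nat.zero_le _, by rw [h0]; simp, by omega, ?_, ?_⟩ <;>
        rw [h0] <;> push_cast <;> omega
    | succ i ih =>
      intro hik
      rcases ih (by omega) with hdone | ⟨y, r, hy, hedr, hri, hyd1, hyd2⟩
      · exact Or.inl hdone
      have hxX : d' i ≤ X.length := F1 X k d' d h0 hstep i (by omega)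
      have hδmem : ((y:ℤ) - (d' i : ℤ)) ∈ Finset.Icc (-(k:ℤ)) (k:ℤ) := by
        rw [Finset.mem_Icc]
        constructor <;> push_cast at * <;> omega
      have hsup := Finset.le_sup (f := fun δ => LCE 0 X Y (d' i : ℤ) ((d' i : ℤ) + δ)) hδmem
      have harg : (d' i : ℤ) + ((y:ℤ) - (d' i : ℤ)) = (y : ℤ) := by ring
      simp only [harg] at hsup
      have hdi : d' i + LCE 0 X Y (d' i : ℤ) (y : ℤ) ≤ d i := by
        have := hlow i (by omega)
        omega
      have hdiX : d i ≤ X.length := F2 X Y k d' d h0 hhigh hstep i (by omega)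
      by_cases hend : X.length ≤ d i
      · exact Or.inl (Hfin X Y k d' d h0 hlow hhigh hstep i (by omega) (by omega))
      right
      set ℓ := LCE 0 X Y (d' i : ℤ) (y : ℤ) with hldef
      have hx1 : d' (i+1) = d i + 1 := by
        rw [hstep i (by omega)]
        omega
      set x := d' i with hxdef
      set x' := d' (i+1) with hxdef'
      have hxx'1 : x + ℓ + 1 ≤ x' := by omega
      have hxx'2 : x' ≤ X.length := by omega
      have hxx'3 : x ≤ x' := by omega
      set n := x' - x with hndef
      have hsplitX : (X.drop x).take n ++ X.drop x' = X.drop x := by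
        have hdd : X.drop x' = (X.drop x).drop n := by
          rw [List.drop_drop]
          congr 1
          omega
        rw [hdd, List.take_append_drop]
      obtain ⟨C, D, hCD, hsum⟩ := ed_cut ((X.drop x).take n) (X.drop x') (Y.drop y)
      rw [hsplitX] at hsum
      have hlenA : ((X.drop x).take n).length = n := by
        rw [List.length_take, List.length_drop]
        omega
      have hClen : y + C.length ≤ Y.length := by
        have hcc := congrArg List.length hCD
        rw [List.length_drop, List.length_append] at hcc
        omega
      have hD : D = Y.drop (y + C.length) := by
        have hcc := congrArg (List.drop C.length) hCD
        rw [List.drop_drop, List.drop_left] at hcc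
        exact hcc.symm
      have hEDAC : 1 ≤ ED ((X.drop x).take n) C := by
        by_contra h'
        have h0' : ED ((X.drop x).take n) C = 0 := by omega
        have hAC := eq_of_ed_eq_zero h0'
        have hCl : C.length = n := by rw [← hAC, hlenA]
        have hll : ℓ + 1 ≤ LCE 0 X Y (x : ℤ) (y : ℤ) := by
          refine le_lce 0 X Y x y (ℓ+1) hxX hy (by omega) (by omega) ?_
          have h1 : (Y.drop y).take (ℓ+1) = C.take (ℓ+1) := by
            rw [hCD]
            exact List.take_append_of_le_length (by omega)
          have h2 : (X.drop x).take (ℓ+1) = C.take (ℓ+1) := by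
            rw [← hAC, List.take_take]
            congr 1
            omega
          rw [h1, h2, hd_self]
        omega
      have hlenAC := len_le_ed ((X.drop x).take n) C
      rw [hlenA] at hlenAC
      rw [hD] at hsum
      refine ⟨y + C.length, r - ED ((X.drop x).take n) C, hClen, ?_, by omega, ?_, ?_⟩
      · have : ED (X.drop x') (Y.drop (y + C.length)) ≤ r - ED ((X.drop x).take n) C := by
          omega
        exact this
      · push_cast
        omega
      · push_cast
        omega
  rcases inv k le_rfl with hdone | ⟨y, r, hy, hedr, hrk, hyd1, hyd2⟩
  · exact hdone
  have hr0 : ED (X.drop (d' k)) (Y.drop y) = 0 := by omega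
  have heq := eq_of_ed_eq_zero hr0
  have hlend : X.length - d' k = Y.length - y := by
    have := congrArg List.length heq
    rw [List.length_drop, List.length_drop] at this
    exact this
  have hxX : d' k ≤ X.length := F1 X k d' d h0 hstep k (by omega)
  have hfull : X.length - d' k ≤ LCE 0 X Y (d' k : ℤ) (y : ℤ) := by
    refine le_lce 0 X Y (d' k) y (X.length - d' k) hxX hy le_rfl (by omega) ?_
    rw [heq, hd_self]
  have hδmem : ((y:ℤ) - (d' k : ℤ)) ∈ Finset.Icc (-(k:ℤ)) (k:ℤ) := by
    rw [Finset.mem_Icc]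
    constructor <;> push_cast at * <;> omega
  have hsup := Finset.le_sup (f := fun δ => LCE 0 X Y (d' k : ℤ) ((d' k : ℤ) + δ)) hδmem
  have harg : (d' k : ℤ) + ((y:ℤ) - (d' k : ℤ)) = (y : ℤ) := by ring
  simp only [harg] at hsup
  have hlk := hlow k le_rfl
  have hdkX : d k ≤ X.length := F2 X Y k d' d h0 hhigh hstep k le_rfl
  omega

end Part1
section Part2
open EDaux EDaux2
variable {α : Type*} [DecidableEq α]

lemma seg_split' (l : List α) (a u v : ℕ) :
    (l.drop a).take u ++ (l.drop (a + u)).take v = (l.drop a).take (u + v) := by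
  rw [List.take_add]
  congr 1
  rw [List.drop_drop]

lemma seg_bound (X Y : List α) (k : ℕ) (x x' yv L eL eR nY : ℕ)
    (hx' : x ≤ x') (hxX : x' ≤ X.length)
    (hyY : yv + L ≤ Y.length)
    (hHD : HD ((X.drop x).take L) ((Y.drop yv).take L) ≤ k)
    (hkk : 1 ≤ k)
    (hs1 : x' ≤ x + L + 1)
    (heR : eR = max (max eL (yv + min (x' - x) L)) nY) :
    ED ((X.drop x).take (x' - x)) ((Y.drop eL).take (eR - eL)) ≤
      (yv - eL) + (eL - yv) + k + ((x' - x) - min (x' - x) L) + ((nY + x) - (x' + yv)) := by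
  set m := x' - x with hm
  set u := min m L with hu
  have hum : u ≤ m := min_le_left _ _
  have huL : u ≤ L := min_le_right _ _
  have hlenA : ((X.drop x).take m).length = m := by
    rw [List.length_take, List.length_drop]; omega
  by_cases hcase : eL ≤ yv + u
  · -- main case
    have heRyu : yv + u ≤ eR := by omega
    have heLeR : eL ≤ eR := by omega
    -- step 1 : strip |eL - yv|
    have hstep1 : ED ((X.drop x).take m) ((Y.drop eL).take (eR - eL)) ≤
        (yv - eL) + (eL - yv) + ED ((X.drop x).take m) ((Y.drop yv).take (eR - yv)) := by
      rcases le_total yv eL with hc | hc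
      · have hsplit := seg_split Y hc heLeR
        have := ed_drop_prefix ((X.drop x).take m) ((Y.drop eL).take (eR - eL))
            ((Y.drop yv).take (eL - yv))
        rw [hsplit] at this
        have hlc : ((Y.drop yv).take (eL - yv)).length ≤ eL - yv := by
          rw [List.length_take]; omega
        omega
      · have hsplit := seg_split Y hc (by omega : yv ≤ eR)
        have := ed_ins_prefix ((X.drop x).take m) ((Y.drop yv).take (eR - yv))
            ((Y.drop eL).take (yv - eL))
        rw [hsplit] at this
        have hlc : ((Y.drop eL).take (yv - eL)).length ≤ yv - eL := by
          rw [List.length_take]; omega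
        omega
    -- step 2 : split into matched block and remainder
    have hsplitA := seg_split' X x u (m - u)
    have hsplitB := seg_split' Y yv u (eR - yv - u)
    rw [show u + (m - u) = m by omega] at hsplitA
    rw [show u + (eR - yv - u) = eR - yv by omega] at hsplitB
    have happ := ed_append ((X.drop x).take u) ((X.drop (x + u)).take (m - u))
        ((Y.drop yv).take u) ((Y.drop (yv + u)).take (eR - yv - u))
    rw [hsplitA, hsplitB] at happ
    -- matched block ≤ k
    have hA2 : (X.drop x).take u = ((X.drop x).take L).take u := by
      rw [List.take_take]
      congr 1
      omega
    have hB2 : (Y.drop yv).take u = ((Y.drop yv).take L).take u := by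
      rw [List.take_take]
      congr 1
      omega
    have hmatch : ED ((X.drop x).take u) ((Y.drop yv).take u) ≤ k := by
      have hhd : HD ((X.drop x).take u) ((Y.drop yv).take u) ≤ k := by
        rw [hA2, hB2]
        exact le_trans (hd_take_le _ _ _) hHD
      refine le_trans (ed_le_hd _ _ ?_) hhd
      rw [List.length_take, List.length_take, List.length_drop, List.length_drop]
      omega
    -- remainder
    have hrem : ED ((X.drop (x + u)).take (m - u)) ((Y.drop (yv + u)).take (eR - yv - u)) ≤
        max (m - u) (eR - yv - u) := by
      refine le_trans (ed_le_max _ _) ?_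
      rw [List.length_take, List.length_take]
      omega
    omega
  · -- degenerate case : previous segments already consumed past this block
    have := ed_le_sum_len ((X.drop x).take m) ((Y.drop eL).take (eR - eL))
    rw [hlenA, List.length_take] at this
    omega

end Part2
section Part2b
open EDaux EDaux2
variable {α : Type*} [DecidableEq α]

lemma part2 (X Y : List α) (k : ℕ) (d' d : ℕ → ℕ) (h0 : d' 0 = 0)
    (hlow : ∀ i ≤ k,
      d' i + (Finset.Icc (-(k : ℤ)) (k : ℤ)).sup
        (fun δ => LCE 0 X Y (d' i) ((d' i : ℤ) + δ)) ≤ d i)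
    (hhigh : ∀ i ≤ k,
      d i ≤ d' i + (Finset.Icc (-(k : ℤ)) (k : ℤ)).sup
        (fun δ => LCE k X Y (d' i) ((d' i : ℤ) + δ)))
    (hstep : ∀ i ≤ k, d' (i + 1) = min X.length (d i + 1))
    (habs : |(X.length : ℤ) - (Y.length : ℤ)| ≤ k) (hdk : d k = X.length) :
    ED X Y ≤ (3 * k + 5) * k := by
  rw [abs_le] at habs
  have hYX : Y.length ≤ X.length + k ∧ X.length ≤ Y.length + k := by
    constructor <;> [skip; skip] <;> push_cast at habs <;> omega
  rcases Nat.eq_zero_or_pos k with hk0 | hkk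
  · -- k = 0
    subst hk0
    have hhi := hhigh 0 le_rfl
    have hXY : X.length = Y.length := by omega
    simp only [Nat.cast_zero, neg_zero, Finset.Icc_self, Finset.sup_singleton, add_zero] at hhi
    have hspec := lce_spec 0 X Y (d' 0) ((d' 0)) (by rw [h0]; exact Nat.zero_le _)
        (by rw [h0]; exact Nat.zero_le _)
    rw [h0] at hhi hspec
    have hL : LCE 0 X Y ((0:ℕ):ℤ) ((0:ℕ):ℤ) = X.length := by
      have := hspec.1
      have h1 : d 0 ≤ 0 + LCE 0 X Y ((0:ℕ):ℤ) ((0:ℕ):ℤ) := by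
        convert hhi using 3 <;> push_cast <;> ring
      omega
    have hHD : HD X Y ≤ 0 := by
      have hh := hspec.2.2
      rw [hL] at hh
      simp only [List.drop_zero] at hh
      rw [List.take_length] at hh
      rw [hXY, List.take_length] at hh
      exact hh
    have := ed_le_hd X Y hXY
    omega
  -- k ≥ 1
  have hF1 := F1 X k d' d h0 hstep
  have hF3 := F3 X Y k d' d hlow
  have hF2 := F2 X Y k d' d h0 hhigh hstep
  have hmono : ∀ i, i ≤ k → d' i ≤ d' (i+1) := by
    intro i hi
    rw [hstep i hi]
    have := hF3 i hi
    have := hF1 i (by omega)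
    omega
  have hXtop : d' (k+1) = X.length := by
    rw [hstep k le_rfl, hdk]
    omega
  -- selection of witnesses
  have hsel : ∀ i : ℕ, ∃ y L : ℕ, i ≤ k → (y ≤ Y.length ∧ y ≤ d' i + k ∧ d' i ≤ y + k ∧
      d' i + L ≤ X.length ∧ y + L ≤ Y.length ∧
      HD ((X.drop (d' i)).take L) ((Y.drop y).take L) ≤ k ∧ d i ≤ d' i + L) := by
    intro i
    by_cases hik : i ≤ k
    swap
    · exact ⟨0, 0, fun h => absurd h hik⟩
    have hhi := hhigh i hik
    have hne : (Finset.Icc (-(k:ℤ)) (k:ℤ)).Nonempty :=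
      ⟨0, by rw [Finset.mem_Icc]; constructor <;> omega⟩
    obtain ⟨δ0, hδ0mem, hδ0⟩ := Finset.exists_mem_eq_sup _ hne
      (fun δ => LCE k X Y (d' i : ℤ) ((d' i:ℤ) + δ))
    rw [Finset.mem_Icc] at hδ0mem
    by_cases hin : 0 ≤ (d' i:ℤ) + δ0 ∧ (d' i:ℤ) + δ0 ≤ Y.length
    · obtain ⟨y, hyz⟩ : ∃ y : ℕ, (y:ℤ) = (d' i:ℤ) + δ0 :=
        ⟨((d' i:ℤ) + δ0).toNat, Int.toNat_of_nonneg hin.1⟩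
      have hyY : y ≤ Y.length := by
        have := hin.2
        omega
      have hspec := lce_spec k X Y (d' i) y (hF1 i (by omega)) hyY
      have hLrw : LCE k X Y (d' i : ℤ) ((d' i:ℤ) + δ0) = LCE k X Y (d' i : ℤ) (y : ℤ) := by
        rw [hyz]
      have hy1 : y ≤ d' i + k := by omega
      have hy2 : d' i ≤ y + k := by omega
      have hd'X := hF1 i (by omega : i ≤ k + 1)
      have hy3 : d' i + LCE k X Y (d' i : ℤ) (y : ℤ) ≤ X.length := by
        have := hspec.1
        omega
      have hy4 : y + LCE k X Y (d' i : ℤ) (y : ℤ) ≤ Y.length := by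
        have := hspec.2.1
        omega
      refine ⟨y, LCE k X Y (d' i : ℤ) (y : ℤ), fun _ => ⟨hyY, hy1, hy2, hy3, hy4, hspec.2.2, ?_⟩⟩
      rw [hδ0] at hhi
      simp only [hLrw] at hhi
      exact hhi
    · have hL0 : LCE k X Y (d' i:ℤ) ((d' i:ℤ) + δ0) = 0 := by
        unfold LCE
        rw [if_neg]
        intro hcond
        exact hin ⟨hcond.2.2.1, hcond.2.2.2⟩
      have hd'X := hF1 i (by omega)
      refine ⟨min (d' i) Y.length, 0, fun _ => ⟨min_le_right _ _, by omega, by omega,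
        by omega, by omega, by simp [HD], ?_⟩⟩
      rw [hδ0] at hhi
      simp only [hL0] at hhi
      omega
  choose yf Lf hself using hsel
  -- the Y-segmentation
  obtain ⟨e, he0, heS⟩ : ∃ e : ℕ → ℕ, e 0 = 0 ∧ ∀ i, e (i+1) =
      max (max (e i) (yf i + min (d' (i+1) - d' i) (Lf i)))
        (if i+1 ≤ k then yf (i+1) else Y.length) :=
    ⟨fun j => Nat.rec 0 (fun i acc => max (max acc (yf i + min (d' (i+1) - d' i) (Lf i)))
        (if i+1 ≤ k then yf (i+1) else Y.length)) j, rfl, fun _ => rfl⟩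
  have heY : ∀ j, j ≤ k + 1 → e j ≤ Y.length := by
    intro j
    induction j with
    | zero => intro _; rw [he0]; exact Nat.zero_le _
    | succ j ih =>
      intro hj
      rw [heS j]
      have h1 := (hself j (by omega)).2.2.2.2.1
      have h2 : min (d' (j+1) - d' j) (Lf j) ≤ Lf j := min_le_right _ _
      have h3 := ih (by omega)
      by_cases hj1 : j + 1 ≤ k
      · rw [if_pos hj1]
        have := (hself (j+1) hj1).1
        omega
      · rw [if_neg hj1]
        omega
  have hetop : e (k+1) = Y.length := by
    rw [heS k, if_neg (by omega)]
    have h1 := (hself k le_rfl).2.2.2.2.1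
    have h2 : min (d' (k+1) - d' k) (Lf k) ≤ Lf k := min_le_right _ _
    have h3 := heY k (by omega)
    omega
  have hemono : ∀ j, e j ≤ e (j+1) := by
    intro j
    rw [heS j]
    exact le_trans (le_max_left _ _) (le_max_left _ _)
  have heup : ∀ i, i ≤ k + 1 → e i ≤ d' i + k := by
    intro i
    induction i with
    | zero => intro _; rw [he0]; exact Nat.zero_le _
    | succ i ih =>
      intro hi
      rw [heS i]
      have h1 := ih (by omega)
      have h2 := (hself i (by omega)).2.1
      have h3 : min (d' (i+1) - d' i) (Lf i) ≤ d' (i+1) - d' i := min_le_left _ _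
      have h4 := hmono i (by omega)
      by_cases hi1 : i + 1 ≤ k
      · rw [if_pos hi1]
        have := (hself (i+1) hi1).2.1
        omega
      · rw [if_neg hi1]
        have h5 : d' (i + 1) = X.length := by
          rw [show i + 1 = k + 1 by omega]
          exact hXtop
        omega
  have heyf : ∀ i, 1 ≤ i → i ≤ k → yf i ≤ e i := by
    intro i h1 h2
    obtain ⟨j, rfl⟩ : ∃ j, i = j + 1 := ⟨i - 1, by omega⟩
    rw [heS j, if_pos h2]
    exact le_max_right _ _
  have hs1 : ∀ i ≤ k, d' (i+1) ≤ d' i + Lf i + 1 := by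
    intro i hi
    rw [hstep i hi]
    have := (hself i hi).2.2.2.2.2.2
    omega
  have hsk : d' (k+1) ≤ d' k + Lf k := by
    rw [hXtop]
    have h1 := (hself k le_rfl).2.2.2.2.2.2
    have h2 := hF2 k le_rfl
    omega
  -- the per-segment bound
  set B : ℕ → ℕ := fun i => (yf i - e i) + (e i - yf i) + k +
      ((d' (i+1) - d' i) - min (d' (i+1) - d' i) (Lf i)) +
      (((if i+1 ≤ k then yf (i+1) else Y.length) + d' i) - (d' (i+1) + yf i)) with hB
  have hseg : ∀ i ≤ k, ED ((X.drop (d' i)).take (d' (i+1) - d' i))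
      ((Y.drop (e i)).take (e (i+1) - e i)) ≤ B i := by
    intro i hi
    have hh := hself i hi
    exact seg_bound X Y k (d' i) (d' (i+1)) (yf i) (Lf i) (e i) (e (i+1))
      (if i+1 ≤ k then yf (i+1) else Y.length)
      (hmono i hi) (hF1 (i+1) (by omega)) hh.2.2.2.2.1 hh.2.2.2.2.2.1 hkk
      (hs1 i hi) (heS i)
  -- global assembly
  have hglob : ∀ j, j ≤ k + 1 → ED (X.take (d' j)) (Y.take (e j)) ≤
      ∑ i ∈ Finset.range j, B i := by
    intro j
    induction j with
    | zero =>
      intro _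
      rw [h0, he0]
      simp [ED, levenshtein]
    | succ j ih =>
      intro hj
      have hXsp := take_split X (hmono j (by omega))
      have hYsp := take_split Y (hemono j)
      rw [hXsp, hYsp, Finset.sum_range_succ]
      exact le_trans (ed_append _ _ _ _) (add_le_add (ih (by omega)) (hseg j (by omega)))
  have hfin := hglob (k+1) le_rfl
  rw [hXtop, hetop, List.take_length, List.take_length, Finset.sum_range_succ] at hfin
  -- final arithmetic
  refine le_trans hfin ?_
  rw [← Finset.sum_range_succ]
  set W : ℕ → ℕ := fun i => (yf i - e i) + (e i - yf i) with hW
  set S : ℕ → ℕ := fun i => (d' (i+1) - d' i) - min (d' (i+1) - d' i) (Lf i) with hS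
  set J : ℕ → ℕ := fun i =>
    ((if i+1 ≤ k then yf (i+1) else Y.length) + d' i) - (d' (i+1) + yf i) with hJ
  have hBeq : ∑ i ∈ Finset.range (k+1), B i =
      (∑ i ∈ Finset.range (k+1), W i) + (∑ i ∈ Finset.range (k+1), J i) +
      (k+1) * k + (∑ i ∈ Finset.range (k+1), S i) := by
    have hconst : (k+1) * k = ∑ _i ∈ Finset.range (k+1), k := by
      simp [Finset.sum_const, Finset.card_range]
    rw [hconst, ← Finset.sum_add_distrib, ← Finset.sum_add_distrib, ← Finset.sum_add_distrib]
    refine Finset.sum_congr rfl fun i _ => ?_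
    simp only [hB, hW, hS, hJ]
    omega
  rw [hBeq]
  -- bounds
  have hSsum : ∑ i ∈ Finset.range (k+1), S i ≤ k := by
    rw [Finset.sum_range_succ]
    have hSk : S k = 0 := by
      simp only [hS]
      omega
    have hSle : ∑ i ∈ Finset.range k, S i ≤ ∑ _i ∈ Finset.range k, 1 := by
      refine Finset.sum_le_sum fun i hi => ?_
      rw [Finset.mem_range] at hi
      have h1 := hs1 i (by omega)
      have h2 := hmono i (by omega)
      simp only [hS]
      omega
    simp only [Finset.sum_const, Finset.card_range, smul_eq_mul, mul_one] at hSle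
    omega
  have hWsum : ∑ i ∈ Finset.range (k+1), W i =
      (∑ i ∈ Finset.range k, W (i+1)) + W 0 := Finset.sum_range_succ' W k
  have hJsum : ∑ i ∈ Finset.range (k+1), J i =
      (∑ i ∈ Finset.range k, J i) + J k := Finset.sum_range_succ J k
  have hWJ : (∑ i ∈ Finset.range k, W (i+1)) + (∑ i ∈ Finset.range k, J i) ≤ k * (2 * k) := by
    rw [← Finset.sum_add_distrib]
    have := Finset.sum_le_card_nsmul (Finset.range k) (fun i => W (i+1) + J i) (2*k) ?_
    · simpa [Finset.card_range, smul_eq_mul] using this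
    intro i hi
    rw [Finset.mem_range] at hi
    have h1 := heyf (i+1) (by omega) (by omega)
    have h2 := heup (i+1) (by omega)
    have h3 := (hself (i+1) (by omega)).2.1
    have h4 := (hself (i+1) (by omega)).2.2.1
    have h5 := (hself i (by omega)).2.1
    have h6 := (hself i (by omega)).2.2.1
    have h7 := hmono i (by omega)
    simp only [hW, hJ, if_pos (by omega : i + 1 + 1 ≤ k + 1)]
    rw [if_pos (by omega : i + 1 ≤ k)]
    omega
  have hW0 : W 0 ≤ k := by
    have h1 := (hself 0 (by omega)).2.1
    simp only [hW, he0, h0]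
    omega
  have hJk : J k ≤ 2 * k := by
    simp only [hJ]
    rw [if_neg (by omega)]
    have h1 := (hself k le_rfl).2.2.1
    have h2 := hYX.1
    omega
  have hmul : (3 * k + 5) * k = k * (2 * k) + k + 2*k + (k+1) * k + k := by ring
  omega

end Part2b


theorem stmt0 {α : Type*} [DecidableEq α] (X Y : List α) (k : ℕ)
    (d' d : ℕ → ℕ)
    (h0 : d' 0 = 0)
    (hlow : ∀ i ≤ k,
      d' i + (Finset.Icc (-(k : ℤ)) (k : ℤ)).sup
        (fun δ => LCE 0 X Y (d' i) ((d' i : ℤ) + δ)) ≤ d i)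
    (hhigh : ∀ i ≤ k,
      d i ≤ d' i + (Finset.Icc (-(k : ℤ)) (k : ℤ)).sup
        (fun δ => LCE k X Y (d' i) ((d' i : ℤ) + δ)))
    (hstep : ∀ i ≤ k, d' (i + 1) = min X.length (d i + 1)) :
    (ED X Y ≤ k → |(X.length : ℤ) - (Y.length : ℤ)| ≤ k ∧ d k = X.length) ∧
    ((|(X.length : ℤ) - (Y.length : ℤ)| ≤ k ∧ d k = X.length) →
      ED X Y ≤ (3 * k + 5) * k) := by
  constructor
  · intro hED
    exact part1 X Y k d' d h0 hlow hhigh hstep hED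
  · intro ⟨habs, hdk⟩
    exact part2 X Y k d' d h0 hlow hhigh hstep habs hdk
end

section
/- Let X and Y be strings over an alphabet Σ, let k ≥ 0 be an integer, and let α ≥ 1 be an integer. For i ∈ [0..k+1] and j ∈ [⌊−k/α⌋−1 .. ⌊k/α⌋+1], let d'_{i,j}, d_{i,j} ∈ ℤ ∪ {−∞} satisfy: d'_{0,0} = 0 and d'_{0,j} = −∞ for j ≠ 0; d_{i,j} = −∞ whenever d'_{i,j} = −∞ or j ∉ [⌊−k/α⌋..⌊k/α⌋]; for each i ∈ [0..k] and j ∈ [⌊−k/α⌋..⌊k/α⌋] with d'_{i,j} ≠ −∞, max_{δ=jα}^{(j+1)α−1} LCE_0^{X,Y}(d'_{i,j}, d'_{i,j}+δ) ≤ d_{i,j} − d'_{i,j} ≤ max_{δ=jα}^{(j+1)α−1} LCE_{α−1}^{X,Y}(d'_{i,j}, d'_{i,j}+δ); and d'_{i+1,j} = min(|X|, max(d_{i,j−1}, d_{i,j}+1, d_{i,j+1}+1)) for each i ∈ [0..k] and j ∈ [⌊−k/α⌋..⌊k/α⌋], with the convention min(|X|, −∞) = −∞. Then each i ∈ [0..k]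 and j ∈ [⌊−k/α⌋..⌊k/α⌋] satisfies: (a) if d'_{i,j} ≠ −∞, then ED(X[0..d'_{i,j}), Y[0..y)) ≤ i + (3i+1)(α−1) for every integer y with d'_{i,j}+jα ≤ y < d'_{i,j}+(j+1)α and 0 ≤ y ≤ |Y|; (b) if d_{i,j} ≠ −∞, then ED(X[0..d_{i,j}), Y[0..y)) ≤ i + 3(i+1)(α−1) for every integer y with d_{i,j}+jα ≤ y < d_{i,j}+(j+1)α and 0 ≤ y ≤ |Y|. -/
/-- Generalized invariant used in the induction. -/
def EDInv {α : Type*} [DecidableEq α] (X Y : List α) (a i : ℕ) (j v B : ℤ) : Prop :=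
  -(i : ℤ) ≤ j ∧ 0 ≤ v ∧ v ≤ (X.length : ℤ) ∧
  ∀ y : ℕ, y ≤ Y.length → (y : ℤ) < v + (j + 1) * a →
    (ED (X.take v.toNat) (Y.take y) : ℤ) ≤ B + max 0 (v + j * a - y)

namespace Aux
variable {α : Type*} [DecidableEq α]

lemma ed_nil_left (B : List α) : ED ([] : List α) B = B.length := by
  induction B with
  | nil => simp [ED, levenshtein]
  | cons b B ih => unfold ED at *; rw [levenshtein.eq_2, ih]; simp only [Levenshtein.defaultCost, List.length_cons]; omega

lemma ed_nil_right (A : List α) : ED A ([] : List α) = A.length := by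
  induction A with
  | nil => simp [ED, levenshtein]
  | cons x xs ih => unfold ED at *; rw [levenshtein.eq_3, ih]; simp only [Levenshtein.defaultCost, List.length_cons]; omega

lemma ed_cons_cons (x y : α) (xs ys : List α) :
    ED (x :: xs) (y :: ys) = min (1 + ED xs (y :: ys))
      (min (1 + ED (x :: xs) ys) ((if x = y then 0 else 1) + ED xs ys)) := by
  unfold ED; rw [levenshtein.eq_4]; simp [Levenshtein.defaultCost]

lemma ed_del_le (x : α) (xs D : List α) : ED (x :: xs) D ≤ 1 + ED xs D := by
  cases D with
  | nil => simp [ed_nil_right]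
  | cons d D => rw [ed_cons_cons]; exact min_le_left _ _

lemma ed_ins_le (y : α) (A ys : List α) : ED A (y :: ys) ≤ 1 + ED A ys := by
  cases A with
  | nil => simp [ed_nil_left]
  | cons a A => rw [ed_cons_cons]; exact le_trans (min_le_right _ _) (min_le_left _ _)

lemma ed_sub_le (x y : α) (xs ys : List α) :
    ED (x :: xs) (y :: ys) ≤ (if x = y then 0 else 1) + ED xs ys := by
  rw [ed_cons_cons]; exact le_trans (min_le_right _ _) (min_le_right _ _)

lemma ed_le_max (C D : List α) : ED C D ≤ max C.length D.length := by
  induction C generalizing D with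
  | nil => rw [ed_nil_left]; simp
  | cons c C ih =>
    cases D with
    | nil => rw [ed_nil_right]; simp
    | cons d D =>
      refine le_trans (ed_sub_le c d C D) ?_
      have := ih D
      simp only [List.length_cons]
      split <;> omega

lemma hd_cons (c d : α) (C D : List α) :
    HD (c :: C) (d :: D) = (if c = d then 0 else 1) + HD C D := by
  simp only [HD, List.zip_cons_cons, List.filter_cons]
  by_cases h : c = d
  · simp [h]
  · simp [h]; omega

lemma ed_le_hd (C D : List α) (h : C.length = D.length) : ED C D ≤ HD C D := by
  induction C generalizing D with
  | nil =>
    cases D with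
    | nil => simp [ED, HD, levenshtein]
    | cons d D => simp at h
  | cons c C ih =>
    cases D with
    | nil => simp at h
    | cons d D =>
      simp only [List.length_cons] at h
      refine le_trans (ed_sub_le c d C D) ?_
      have h2 := ih D (by omega)
      rw [hd_cons]
      generalize (if c = d then (0:ℕ) else 1) = e
      omega

lemma ed_append (A C B D : List α) : ED (A ++ C) (B ++ D) ≤ ED A B + ED C D := by
  induction A generalizing B with
  | nil =>
    rw [ed_nil_left]
    induction B with
    | nil => simp
    | cons b B ihB =>
      simp only [List.nil_append] at *
      refine le_trans (ed_ins_le b C (B ++ D)) ?_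
      simp only [List.length_cons]; omega
  | cons a A ihA =>
    induction B with
    | nil =>
      rw [ed_nil_right]
      simp only [List.nil_append, List.cons_append]
      refine le_trans (ed_del_le a (A ++ C) D) ?_
      have := ihA []
      rw [ed_nil_right] at this
      simp only [List.nil_append] at this
      simp only [List.length_cons]; omega
    | cons b B ihB =>
      simp only [List.cons_append]
      rw [ed_cons_cons a b (A ++ C) (B ++ D), ed_cons_cons a b A B]
      have h1 := ihA (b :: B)
      have h3 := ihA B
      simp only [List.cons_append] at ihB h1
      generalize (if a = b then (0:ℕ) else 1) = e
      omega

lemma ed_ge_sub (A D : List α) : A.length ≤ ED A D + D.length := by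
  suffices H : ∀ n (A D : List α), A.length + D.length ≤ n →
      A.length ≤ ED A D + D.length from H _ A D le_rfl
  intro n
  induction n with
  | zero =>
    intro A D h
    cases A with
    | nil => simp
    | cons a A' => simp at h
  | succ n ih =>
    intro A D h
    cases A with
    | nil => simp
    | cons a A' =>
      cases D with
      | nil => rw [ed_nil_right]; simp
      | cons d D' =>
        rw [ed_cons_cons]
        simp only [List.length_cons] at h ⊢
        have h1 := ih A' (d :: D') (by simp only [List.length_cons]; omega)
        have h2 := ih (a :: A') D' (by simp only [List.length_cons]; omega)
        have h3 := ih A' D' (by omega)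
        simp only [List.length_cons] at h1 h2
        generalize (if a = d then (0:ℕ) else 1) = e
        omega

lemma ed_shrink (A B D : List α) : ED A B ≤ ED A (B ++ D) + D.length := by
  suffices H : ∀ n (A B : List α), A.length + B.length ≤ n →
      ED A B ≤ ED A (B ++ D) + D.length from H _ A B le_rfl
  intro n
  induction n with
  | zero =>
    intro A B h
    have hA : A = [] := by cases A; rfl; simp at h
    subst hA
    rw [ed_nil_left, ed_nil_left]
    simp; omega
  | succ n ih =>
    intro A B h
    cases A with
    | nil => rw [ed_nil_left, ed_nil_left]; simp; omega
    | cons a A' =>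
      cases B with
      | nil =>
        simp only [List.nil_append]
        rw [ed_nil_right]
        exact ed_ge_sub _ _
      | cons b B' =>
        simp only [List.cons_append]
        rw [ed_cons_cons a b A' B', ed_cons_cons a b A' (B' ++ D)]
        simp only [List.length_cons] at h
        have h1 := ih A' (b :: B') (by simp only [List.length_cons]; omega)
        have h2 := ih (a :: A') B' (by simp only [List.length_cons]; omega)
        have h3 := ih A' B' (by omega)
        simp only [List.cons_append] at h1
        generalize (if a = b then (0:ℕ) else 1) = e
        omega

lemma hd_take_le (U V : List α) (n : ℕ) : HD (U.take n) (V.take n) ≤ HD U V := by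
  unfold HD
  rw [List.zip_eq_zipWith, List.zip_eq_zipWith, ← List.take_zipWith]
  exact ((List.take_sublist _ _).filter _).length_le

lemma ed_take_le_max (X Y : List α) (p q : ℕ) : ED (X.take p) (Y.take q) ≤ max p q := by
  refine le_trans (ed_le_max _ _) ?_
  simp only [List.length_take]
  omega

omit [DecidableEq α] in
lemma take_split (X : List α) (w v : ℕ) (h : w ≤ v) :
    X.take v = X.take w ++ (X.drop w).take (v - w) := by
  rw [← List.take_add]; congr 1; omega

lemma moveY_up (X Y : List α) (v y' y : ℕ) (h1 : y' ≤ y) (h2 : y ≤ Y.length) :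
    ED (X.take v) (Y.take y) ≤ ED (X.take v) (Y.take y') + (y - y') := by
  rw [take_split Y y' y h1]
  have hl : ((Y.drop y').take (y - y')).length = y - y' := by
    simp only [List.length_take, List.length_drop]; omega
  have := ed_append (X.take v) [] (Y.take y') ((Y.drop y').take (y - y'))
  rw [List.append_nil, ed_nil_left, hl] at this
  exact this

lemma moveY_down (X Y : List α) (v y y' : ℕ) (h1 : y ≤ y') (h2 : y' ≤ Y.length) :
    ED (X.take v) (Y.take y) ≤ ED (X.take v) (Y.take y') + (y' - y) := by
  have hs := take_split Y y y' h1
  have hl : ((Y.drop y).take (y' - y)).length = y' - y := by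
    simp only [List.length_take, List.length_drop]; omega
  have := ed_shrink (X.take v) (Y.take y) ((Y.drop y).take (y' - y))
  rw [← hs, hl] at this
  exact this

lemma moveX_up (X : List α) (B : List α) (w v : ℕ) (h1 : w ≤ v) (h2 : v ≤ X.length) :
    ED (X.take v) B ≤ ED (X.take w) B + (v - w) := by
  rw [take_split X w v h1]
  have hl : ((X.drop w).take (v - w)).length = v - w := by
    simp only [List.length_take, List.length_drop]; omega
  have := ed_append (X.take w) ((X.drop w).take (v - w)) B []
  rw [List.append_nil, ed_nil_right, hl] at this
  exact this

lemma substRect (X Y : List α) (w v y' y : ℕ) (hw : w ≤ v) (hv : v ≤ X.length)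
    (hy' : y' ≤ y) (hy : y ≤ Y.length) :
    ED (X.take v) (Y.take y) ≤ ED (X.take w) (Y.take y') + max (v - w) (y - y') := by
  rw [take_split X w v hw, take_split Y y' y hy']
  refine le_trans (ed_append _ _ _ _) ?_
  have h1 := ed_le_max ((X.drop w).take (v - w)) ((Y.drop y').take (y - y'))
  have h2 : ((X.drop w).take (v - w)).length ≤ v - w := by
    simp only [List.length_take, List.length_drop]; omega
  have h3 : ((Y.drop y').take (y - y')).length ≤ y - y' := by
    simp only [List.length_take, List.length_drop]; omega
  have : ED ((X.drop w).take (v - w)) ((Y.drop y').take (y - y')) ≤ max (v - w) (y - y') := by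
    refine le_trans h1 ?_; omega
  omega

lemma diagStep (X Y : List α) (v y0 ℓ : ℕ) (hx : v + ℓ ≤ X.length) (hy : y0 + ℓ ≤ Y.length) :
    ED (X.take (v + ℓ)) (Y.take (y0 + ℓ)) ≤
      ED (X.take v) (Y.take y0) + HD ((X.drop v).take ℓ) ((Y.drop y0).take ℓ) := by
  rw [take_split X v (v + ℓ) (by omega), take_split Y y0 (y0 + ℓ) (by omega)]
  simp only [Nat.add_sub_cancel_left]
  refine le_trans (ed_append _ _ _ _) ?_
  have hlen : ((X.drop v).take ℓ).length = ((Y.drop y0).take ℓ).length := by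
    simp only [List.length_take, List.length_drop]; omega
  have := ed_le_hd ((X.drop v).take ℓ) ((Y.drop y0).take ℓ) hlen
  omega


lemma hd_take_le2 (U V : List α) (n : ℕ) : HD (U.take n) (V.take n) ≤ HD U V := hd_take_le U V n

lemma lce_spec (k' : ℕ) (X Y : List α) (x y : ℤ) (ℓ : ℕ) (hpos : 0 < ℓ)
    (hle : ℓ ≤ LCE k' X Y x y) :
    0 ≤ x ∧ x ≤ X.length ∧ 0 ≤ y ∧ y ≤ Y.length ∧
    x.toNat + ℓ ≤ X.length ∧ y.toNat + ℓ ≤ Y.length ∧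
    HD ((X.drop x.toNat).take ℓ) ((Y.drop y.toNat).take ℓ) ≤ k' := by
  by_cases hr : 0 ≤ x ∧ x ≤ X.length ∧ 0 ≤ y ∧ y ≤ Y.length
  · rw [LCE, if_pos hr] at hle
    set P := fun ℓ => ℓ ≤ X.length - x.toNat ∧ ℓ ≤ Y.length - y.toNat ∧
        HD ((X.drop x.toNat).take ℓ) ((Y.drop y.toNat).take ℓ) ≤ k' with hP
    have hP0 : P 0 := ⟨Nat.zero_le _, Nat.zero_le _, by simp [HD]⟩
    have hspec := Nat.findGreatest_spec (P := P)
      (n := min (X.length - x.toNat) (Y.length - y.toNat)) (Nat.zero_le _) hP0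
    obtain ⟨hA, hB, hC⟩ := hspec
    set L := Nat.findGreatest P (min (X.length - x.toNat) (Y.length - y.toNat)) with hL
    have hxt : (x.toNat : ℤ) = x := Int.toNat_of_nonneg hr.1
    have hyt : (y.toNat : ℤ) = y := Int.toNat_of_nonneg hr.2.2.1
    have hxX : x.toNat ≤ X.length := by omega
    have hyY : y.toNat ≤ Y.length := by omega
    have e1 : (X.drop x.toNat).take ℓ = ((X.drop x.toNat).take L).take ℓ := by
      rw [List.take_take]; congr 1; omega
    have e2 : (Y.drop y.toNat).take ℓ = ((Y.drop y.toNat).take L).take ℓ := by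
      rw [List.take_take]; congr 1; omega
    refine ⟨hr.1, hr.2.1, hr.2.2.1, hr.2.2.2, by omega, by omega, ?_⟩
    rw [e1, e2]
    exact le_trans (hd_take_le _ _ _) hC
  · rw [LCE, if_neg hr] at hle
    omega


lemma edinv_mono {X Y : List α} {a i : ℕ} {j v : ℤ} {B1 B2 : ℤ}
    (h : EDInv X Y a i j v B1) (hB : B1 ≤ B2) : EDInv X Y a i j v B2 := by
  obtain ⟨h1, h2, h3, h4⟩ := h
  exact ⟨h1, h2, h3, fun y hy hy2 => le_trans (h4 y hy hy2) (by omega)⟩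

end Aux


theorem stmt4 {α : Type*} [DecidableEq α] (X Y : List α) (k a : ℕ) (ha : 1 ≤ a)
    (d' d : ℕ → ℤ → WithBot ℤ)
    (h00 : d' 0 0 = 0)
    (h0j : ∀ j : ℤ, Int.fdiv (-(k : ℤ)) a - 1 ≤ j → j ≤ Int.fdiv (k : ℤ) a + 1 →
      j ≠ 0 → d' 0 j = ⊥)
    (hbot : ∀ i ≤ k + 1, ∀ j : ℤ, Int.fdiv (-(k : ℤ)) a - 1 ≤ j → j ≤ Int.fdiv (k : ℤ) a + 1 →
      (d' i j = ⊥ ∨ j < Int.fdiv (-(k : ℤ)) a ∨ Int.fdiv (k : ℤ) a < j) → d i j = ⊥)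
    (hlce : ∀ i ≤ k, ∀ j : ℤ, Int.fdiv (-(k : ℤ)) a ≤ j → j ≤ Int.fdiv (k : ℤ) a →
      ∀ v : ℤ, d' i j = (v : WithBot ℤ) →
        ((v + (((Finset.Icc (j * a) ((j + 1) * a - 1)).sup
            (fun δ => LCE 0 X Y v (v + δ)) : ℕ) : ℤ) : ℤ) : WithBot ℤ) ≤ d i j ∧
        d i j ≤ ((v + (((Finset.Icc (j * a) ((j + 1) * a - 1)).sup
            (fun δ => LCE (a - 1) X Y v (v + δ)) : ℕ) : ℤ) : ℤ) : WithBot ℤ))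
    (hstep : ∀ i ≤ k, ∀ j : ℤ, Int.fdiv (-(k : ℤ)) a ≤ j → j ≤ Int.fdiv (k : ℤ) a →
      d' (i + 1) j = min ((X.length : ℤ) : WithBot ℤ)
        (max (d i (j - 1)) (max (d i j + 1) (d i (j + 1) + 1)))) :
    ∀ i ≤ k, ∀ j : ℤ, Int.fdiv (-(k : ℤ)) a ≤ j → j ≤ Int.fdiv (k : ℤ) a →
      (∀ v : ℤ, d' i j = (v : WithBot ℤ) →
        ∀ y : ℕ, v + j * a ≤ (y : ℤ) → (y : ℤ) < v + (j + 1) * a → y ≤ Y.length →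
          ED (X.take v.toNat) (Y.take y) ≤ i + (3 * i + 1) * (a - 1)) ∧
      (∀ v : ℤ, d i j = (v : WithBot ℤ) →
        ∀ y : ℕ, v + j * a ≤ (y : ℤ) → (y : ℤ) < v + (j + 1) * a → y ≤ Y.length →
          ED (X.take v.toNat) (Y.take y) ≤ i + 3 * (i + 1) * (a - 1)) := by
  set lo : ℤ := Int.fdiv (-(k : ℤ)) a with hlo
  set hi : ℤ := Int.fdiv (k : ℤ) a with hhi
  have hYnn : (0 : ℤ) ≤ (Y.length : ℤ) := by positivity
  have hXnn : (0 : ℤ) ≤ (X.length : ℤ) := by positivity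
  -- base case
  have baseA : ∀ j : ℤ, lo ≤ j → j ≤ hi → ∀ v : ℤ, d' 0 j = (v : WithBot ℤ) →
      EDInv X Y a 0 j v ((0 : ℤ) + (3 * 0 + 1) * ((a : ℤ) - 1)) := by
    intro j hjlo hjhi v hv
    by_cases hj : j = 0
    · subst hj
      rw [h00] at hv
      have hv0 : v = 0 := by exact_mod_cast hv.symm
      subst hv0
      refine ⟨by simp, le_refl _, hXnn, ?_⟩
      intro y hy hylt
      have hx0 : (0 : ℤ).toNat = 0 := rfl
      rw [hx0, List.take_zero, Aux.ed_nil_left]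
      have hlen : (Y.take y).length = y := by
        simp only [List.length_take]; omega
      rw [hlen]
      omega
    · rw [h0j j (by omega) (by omega) hj] at hv
      exact absurd hv.symm (WithBot.coe_ne_bot)
  -- step from d' to d on the same level
  have stepB : ∀ i, i ≤ k →
      (∀ j : ℤ, lo ≤ j → j ≤ hi → ∀ v : ℤ, d' i j = (v : WithBot ℤ) →
        EDInv X Y a i j v ((i : ℤ) + (3 * i + 1) * ((a : ℤ) - 1))) →
      (∀ j : ℤ, lo ≤ j → j ≤ hi → ∀ w : ℤ, d i j = (w : WithBot ℤ) →
        EDInv X Y a i j w ((i : ℤ) + 3 * ((i : ℤ) + 1) * ((a : ℤ) - 1))) := by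
    intro i hik hAi j hjlo hjhi w hdw
    have hd'nb : d' i j ≠ ⊥ := by
      intro hb
      have h := hbot i (by omega) j (by omega) (by omega) (Or.inl hb)
      rw [hdw] at h
      exact WithBot.coe_ne_bot h
    obtain ⟨v, hv⟩ := WithBot.ne_bot_iff_exists.mp hd'nb
    have hv' : d' i j = (v : WithBot ℤ) := hv.symm
    obtain ⟨hlow, hupp⟩ := hlce i hik j hjlo hjhi v hv'
    rw [hdw] at hlow hupp
    have hlow' : v + (((Finset.Icc (j * (a : ℤ)) ((j + 1) * a - 1)).sup
        (fun δ => LCE 0 X Y v (v + δ)) : ℕ) : ℤ) ≤ w := by exact_mod_cast hlow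
    have hupp' : w ≤ v + (((Finset.Icc (j * (a : ℤ)) ((j + 1) * a - 1)).sup
        (fun δ => LCE (a - 1) X Y v (v + δ)) : ℕ) : ℤ) := by exact_mod_cast hupp
    obtain ⟨hji, hv0, hvX, hbnd⟩ := hAi j hjlo hjhi v hv'
    have hBBa : (i : ℤ) + 3 * ((i : ℤ) + 1) * ((a : ℤ) - 1)
        = ((i : ℤ) + (3 * i + 1) * ((a : ℤ) - 1)) + 2 * ((a : ℤ) - 1) := by ring
    have hja : (j + 1) * (a : ℤ) = j * a + a := by ring
    have hvw : v ≤ w := by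
      have hnn : (0 : ℤ) ≤ (((Finset.Icc (j * (a : ℤ)) ((j + 1) * a - 1)).sup
        (fun δ => LCE 0 X Y v (v + δ)) : ℕ) : ℤ) := Int.natCast_nonneg _
      omega
    rcases eq_or_lt_of_le hvw with heq | hlt
    · subst heq
      refine ⟨hji, hv0, hvX, ?_⟩
      intro y hy hylt
      have := hbnd y hy hylt
      omega
    · -- real extension
      set S : ℕ := (Finset.Icc (j * (a : ℤ)) ((j + 1) * a - 1)).sup
        (fun δ => LCE (a - 1) X Y v (v + δ)) with hS
      set ℓn : ℕ := (w - v).toNat with hℓn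
      have hℓcast : (ℓn : ℤ) = w - v := Int.toNat_of_nonneg (by omega)
      have hne : (Finset.Icc (j * (a : ℤ)) ((j + 1) * a - 1)).Nonempty :=
        Finset.nonempty_Icc.mpr (by omega)
      obtain ⟨δ0, hδmem, hδeq⟩ := Finset.exists_mem_eq_sup _ hne
        (fun δ => LCE (a - 1) X Y v (v + δ))
      rw [Finset.mem_Icc] at hδmem
      have hleS : ℓn ≤ LCE (a - 1) X Y v (v + δ0) := by
        rw [← hδeq]; omega
      obtain ⟨h0v, hvL, h0y0, hy0Y, hXlen, hYlen, hHD⟩ :=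
        Aux.lce_spec (a - 1) X Y v (v + δ0) ℓn (by omega) hleS
      set y0 : ℕ := (v + δ0).toNat with hy0d
      have hy0 : (y0 : ℤ) = v + δ0 := Int.toNat_of_nonneg h0y0
      have base := hbnd y0 (by omega) (by omega)
      have hpen0 : max 0 (v + j * a - (y0 : ℤ)) = 0 := by omega
      rw [hpen0, add_zero] at base
      have diag := Aux.diagStep X Y v.toNat y0 ℓn hXlen hYlen
      have hwt : w.toNat = v.toNat + ℓn := by omega
      have hHD' : (HD ((X.drop v.toNat).take ℓn) ((Y.drop y0).take ℓn) : ℤ)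
          ≤ (a : ℤ) - 1 := by omega
      refine ⟨hji, by omega, by omega, ?_⟩
      intro y hy hylt
      rw [hwt]
      rcases le_total y (y0 + ℓn) with hcase | hcase
      · have mv := Aux.moveY_down X Y (v.toNat + ℓn) y (y0 + ℓn) hcase (by omega)
        omega
      · have mv := Aux.moveY_up X Y (v.toNat + ℓn) (y0 + ℓn) y hcase hy
        omega
  -- step from level i (d) to level i+1 (d')
  have stepA : ∀ i, i ≤ k →
      (∀ j : ℤ, lo ≤ j → j ≤ hi → ∀ w : ℤ, d i j = (w : WithBot ℤ) →
        EDInv X Y a i j w ((i : ℤ) + 3 * ((i : ℤ) + 1) * ((a : ℤ) - 1))) →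
      (∀ j : ℤ, lo ≤ j → j ≤ hi → ∀ v : ℤ, d' (i + 1) j = (v : WithBot ℤ) →
        EDInv X Y a (i + 1) j v (((i : ℤ) + 1) + (3 * ((i : ℤ) + 1) + 1) * ((a : ℤ) - 1))) := by
    intro i hik hBi j hjlo hjhi v hv
    have hst := hstep i hik j hjlo hjhi
    rw [hv] at hst
    set T1 := d i (j - 1) with hT1
    set T2 := d i j + 1 with hT2
    set T3 := d i (j + 1) + 1 with hT3
    have hMnb : max T1 (max T2 T3) ≠ ⊥ := by
      intro hb
      rw [hb] at hst
      rw [min_eq_right (bot_le : (⊥ : WithBot ℤ) ≤ _)] at hst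
      exact WithBot.coe_ne_bot hst
    obtain ⟨m, hm⟩ := WithBot.ne_bot_iff_exists.mp hMnb
    have hveq : v = min (X.length : ℤ) m := by
      rw [← hm, ← WithBot.coe_min] at hst
      exact WithBot.coe_inj.mp hst
    have hBB : ((i : ℤ) + 1) + (3 * ((i : ℤ) + 1) + 1) * ((a : ℤ) - 1)
        = ((i : ℤ) + 3 * ((i : ℤ) + 1) * ((a : ℤ) - 1)) + 1 + ((a : ℤ) - 1) := by ring
    have hja : (j + 1) * (a : ℤ) = j * a + a := by ring
    have hja2 : (j - 1 + 1) * (a : ℤ) = j * a := by ring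
    have hja3 : (j - 1) * (a : ℤ) = j * a - a := by ring
    have hja4 : (j + 1 + 1) * (a : ℤ) = j * a + a + a := by ring
    -- which term attains the max?
    have hcases : T1 = (m : WithBot ℤ) ∨ T2 = (m : WithBot ℤ) ∨ T3 = (m : WithBot ℤ) := by
      rcases max_choice T1 (max T2 T3) with h | h
      · exact Or.inl (h.symm.trans hm.symm)
      · rcases max_choice T2 T3 with h2 | h2
        · exact Or.inr (Or.inl ((h.trans h2).symm.trans hm.symm))
        · exact Or.inr (Or.inr ((h.trans h2).symm.trans hm.symm))
    rcases hcases with hc | hc | hc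
    · -- case A : deletion, source (i, j-1)
      have hjlo' : lo ≤ j - 1 := by
        by_contra hcon
        have hb := hbot i (by omega) (j - 1) (by omega) (by omega) (Or.inr (Or.inl (by omega)))
        rw [hT1] at hc
        rw [hb] at hc
        exact WithBot.coe_ne_bot hc.symm
      rw [hT1] at hc
      obtain ⟨hji, hw0, hwX, hbnd⟩ := hBi (j - 1) hjlo' (by omega) m hc
      have hvm : v = m := by omega
      subst hvm
      refine ⟨by omega, hw0, by omega, ?_⟩
      intro y hy hylt
      by_cases hya : a ≤ y
      · -- shift down by a
        have hb2 := hbnd (y - a) (by omega) (by omega)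
        have mv := Aux.moveY_up X Y v.toNat (y - a) y (by omega) hy
        omega
      · by_cases hpos : 0 < v + j * a
        · have hb2 := hbnd 0 (by omega) (by omega)
          have mv := Aux.moveY_up X Y v.toNat 0 y (by omega) hy
          omega
        · -- dead-left corner, crude bound
          have crude := Aux.ed_take_le_max X Y v.toNat y
          have hj1 : -(j : ℤ) ≤ (i : ℤ) - 1 := by omega
          have hmul : (-(j : ℤ)) * (a : ℤ) ≤ ((i : ℤ) - 1) * (a : ℤ) :=
            mul_le_mul_of_nonneg_right hj1 (by omega)
          have hr1 : (-(j : ℤ)) * (a : ℤ) = -(j * a) := by ring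
          have hr2 : ((i : ℤ) - 1) * (a : ℤ) = ((i : ℤ) - 1) * ((a : ℤ) - 1) + (i - 1) := by
            ring
          have hr3 : ((i : ℤ) - 1) * ((a : ℤ) - 1) ≤ 3 * ((i : ℤ) + 1) * ((a : ℤ) - 1) :=
            mul_le_mul_of_nonneg_right (by omega) (by omega)
          have hl0 : (0 : ℤ) ≤ 3 * ((i : ℤ) + 1) * ((a : ℤ) - 1) :=
            mul_nonneg (by positivity) (by omega)
          omega
    · -- case B : substitution, source (i, j)
      rw [hT2] at hc
      have hdnb : d i j ≠ ⊥ := by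
        intro hb
        rw [hb, WithBot.bot_add] at hc
        exact WithBot.coe_ne_bot hc.symm
      obtain ⟨w, hw⟩ := WithBot.ne_bot_iff_exists.mp hdnb
      have hmw : m = w + 1 := by
        rw [← hw] at hc
        have : ((w + 1 : ℤ) : WithBot ℤ) = ((m : ℤ) : WithBot ℤ) := by
          rw [← hc]; push_cast; ring
        exact (WithBot.coe_inj.mp this).symm
      obtain ⟨hji, hw0, hwX, hbnd⟩ := hBi j hjlo hjhi w hw.symm
      have hwv : w ≤ v ∧ v ≤ w + 1 ∧ v ≤ (X.length : ℤ) := by omega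
      refine ⟨by omega, by omega, by omega, ?_⟩
      intro y hy hylt
      by_cases hdead : w + (j + 1) * a ≤ 0
      · -- dead-left corner
        have hyeq : y = 0 := by omega
        subst hyeq
        have crude := Aux.ed_take_le_max X Y v.toNat 0
        have hj1 : -((j : ℤ) + 1) ≤ (i : ℤ) - 1 := by omega
        have hmul : (-((j : ℤ) + 1)) * (a : ℤ) ≤ ((i : ℤ) - 1) * (a : ℤ) :=
          mul_le_mul_of_nonneg_right hj1 (by omega)
        have hr1 : (-((j : ℤ) + 1)) * (a : ℤ) = -(j * a) - a := by ring
        have hr2 : ((i : ℤ) - 1) * (a : ℤ) = ((i : ℤ) - 1) * ((a : ℤ) - 1) + (i - 1) := by ring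
        have hr3 : ((i : ℤ) - 1) * ((a : ℤ) - 1) ≤ 3 * ((i : ℤ) + 1) * ((a : ℤ) - 1) :=
          mul_le_mul_of_nonneg_right (by omega) (by omega)
        have hl0 : (0 : ℤ) ≤ 3 * ((i : ℤ) + 1) * ((a : ℤ) - 1) :=
          mul_nonneg (by positivity) (by omega)
        omega
      · set y' : ℕ := min y (w + (j + 1) * a - 1).toNat with hy'd
        have hy'c : (y' : ℤ) = min (y : ℤ) (w + (j + 1) * a - 1) := by
          have : ((w + (j + 1) * (a : ℤ) - 1).toNat : ℤ) = w + (j + 1) * a - 1 :=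
            Int.toNat_of_nonneg (by omega)
          omega
        have hb2 := hbnd y' (by omega) (by omega)
        have mv := Aux.substRect X Y w.toNat v.toNat y' y (by omega) (by omega)
          (by omega) hy
        have hmax1 : max (v.toNat - w.toNat) (y - y') ≤ 1 := by omega
        omega
    · -- case C : insertion, source (i, j+1)
      rw [hT3] at hc
      have hjhi' : j + 1 ≤ hi := by
        by_contra hcon
        have hb := hbot i (by omega) (j + 1) (by omega) (by omega)
          (Or.inr (Or.inr (by omega)))
        rw [hb, WithBot.bot_add] at hc
        exact WithBot.coe_ne_bot hc.symm
      have hdnb : d i (j + 1) ≠ ⊥ := by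
        intro hb
        rw [hb, WithBot.bot_add] at hc
        exact WithBot.coe_ne_bot hc.symm
      obtain ⟨w, hw⟩ := WithBot.ne_bot_iff_exists.mp hdnb
      have hmw : m = w + 1 := by
        rw [← hw] at hc
        have : ((w + 1 : ℤ) : WithBot ℤ) = ((m : ℤ) : WithBot ℤ) := by
          rw [← hc]; push_cast; ring
        exact (WithBot.coe_inj.mp this).symm
      obtain ⟨hji, hw0, hwX, hbnd⟩ := hBi (j + 1) (by omega) hjhi' w hw.symm
      refine ⟨by omega, by omega, by omega, ?_⟩
      intro y hy hylt
      have hb2 := hbnd y hy (by omega)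
      have mv := Aux.moveX_up X (Y.take y) w.toNat v.toNat (by omega) (by omega)
      omega
  -- assemble the induction
  have main : ∀ i, i ≤ k →
      (∀ j : ℤ, lo ≤ j → j ≤ hi → ∀ v : ℤ, d' i j = (v : WithBot ℤ) →
        EDInv X Y a i j v ((i : ℤ) + (3 * i + 1) * ((a : ℤ) - 1))) ∧
      (∀ j : ℤ, lo ≤ j → j ≤ hi → ∀ w : ℤ, d i j = (w : WithBot ℤ) →
        EDInv X Y a i j w ((i : ℤ) + 3 * ((i : ℤ) + 1) * ((a : ℤ) - 1))) := by
    intro i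
    induction i with
    | zero =>
      intro h
      have hA0 : ∀ j : ℤ, lo ≤ j → j ≤ hi → ∀ v : ℤ, d' 0 j = (v : WithBot ℤ) →
          EDInv X Y a 0 j v (((0 : ℕ) : ℤ) + (3 * ((0 : ℕ) : ℤ) + 1) * ((a : ℤ) - 1)) :=
        fun j h1 h2 v h3 =>
          Aux.edinv_mono (baseA j h1 h2 v h3) (le_of_eq (by push_cast; ring))
      exact ⟨by exact_mod_cast hA0, stepB 0 h (by exact_mod_cast hA0)⟩
    | succ n ih =>
      intro h
      obtain ⟨hAn, hBn⟩ := ih (by omega)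
      have hA' := stepA n (by omega) hBn
      have hA'' : ∀ j : ℤ, lo ≤ j → j ≤ hi → ∀ v : ℤ, d' (n + 1) j = (v : WithBot ℤ) →
          EDInv X Y a (n + 1) j v (((n + 1 : ℕ) : ℤ) + (3 * ((n + 1 : ℕ) : ℤ) + 1) * ((a : ℤ) - 1)) :=
        fun j h1 h2 v h3 =>
          Aux.edinv_mono (hA' j h1 h2 v h3) (le_of_eq (by push_cast; ring))
      exact ⟨by exact_mod_cast hA'', stepB (n + 1) h (by exact_mod_cast hA'')⟩
  intro i hik j hjlo hjhi
  obtain ⟨hAi, hBi⟩ := main i hik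
  have hcast : ((i + (3 * i + 1) * (a - 1) : ℕ) : ℤ)
      = (i : ℤ) + (3 * i + 1) * ((a : ℤ) - 1) := by
    push_cast [Nat.cast_sub ha]; ring
  have hcast2 : ((i + 3 * (i + 1) * (a - 1) : ℕ) : ℤ)
      = (i : ℤ) + 3 * ((i : ℤ) + 1) * ((a : ℤ) - 1) := by
    push_cast [Nat.cast_sub ha]; ring
  constructor
  · intro v hv y hy1 hy2 hy3
    obtain ⟨_, _, _, hbnd⟩ := hAi j hjlo hjhi v hv
    have := hbnd y hy3 hy2
    have hmax : max 0 (v + j * a - (y : ℤ)) = 0 := by omega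
    rw [hmax, add_zero] at this
    omega
  · intro v hv y hy1 hy2 hy3
    obtain ⟨_, _, _, hbnd⟩ := hBi j hjlo hjhi v hv
    have := hbnd y hy3 hy2
    have hmax : max 0 (v + j * a - (y : ℤ)) = 0 := by omega
    rw [hmax, add_zero] at this
    omega
end

section
/- Let P and T be strings over an alphabet Σ with P nonempty and |T| ≤ (3/2)·|P|. Then Occ(P,T) forms an arithmetic progression with difference per(P): there exist a natural number a and a natural number m such that Occ(P,T) = { a + t·per(P) : t ∈ [0..m) }. -/
/-- `p` is a period of `X` if `p > 0` and `X[i] = X[i+p]` for all `i ∈ [0..|X|-p)`. -/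
def IsPeriod {α : Type*} (X : List α) (p : ℕ) : Prop :=
  0 < p ∧ ∀ i, i + p < X.length → X[i]? = X[i + p]?

/-- `per X` is the smallest period of `X`. -/
noncomputable def per {α : Type*} (X : List α) : ℕ :=
  sInf {p | IsPeriod X p}

/-- `Occ P T` is the set of positions `ℓ` with `T[ℓ..ℓ+|P|) = P`. -/
def Occ {α : Type*} (P T : List α) : Set ℕ :=
  {ℓ | (T.drop ℓ).take P.length = P}

lemma occ_iff {α : Type*} (P T : List α) (hP : P ≠ []) (ℓ : ℕ) :
    ℓ ∈ Occ P T ↔ ℓ + P.length ≤ T.length ∧ ∀ i < P.length, T[ℓ+i]? = P[i]? := by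
  have hP0 : 0 < P.length := List.length_pos_iff.2 hP
  constructor
  · intro h
    have hlen : ((T.drop ℓ).take P.length).length = P.length := by rw [h]
    simp only [List.length_take, List.length_drop] at hlen
    have hle : ℓ + P.length ≤ T.length := by omega
    refine ⟨hle, fun i hi => ?_⟩
    have := congrArg (fun l => l[i]?) h
    rw [List.getElem?_take] at this
    simp only [hi, if_pos, List.getElem?_drop] at this
    exact this
  · rintro ⟨hle, h⟩
    apply List.ext_getElem?
    intro i
    rw [List.getElem?_take]
    by_cases hi : i < P.length
    · simp only [hi, if_pos, List.getElem?_drop]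
      exact h i hi
    · simp only [hi, if_neg, ite_false]
      rw [eq_comm, List.getElem?_eq_none_iff]
      omega

lemma period_len {α : Type*} (X : List α) (hX : X ≠ []) : IsPeriod X X.length :=
  ⟨List.length_pos_iff.2 hX, fun i hi => by omega⟩

lemma per_isPeriod {α : Type*} (X : List α) (hX : X ≠ []) : IsPeriod X (per X) :=
  Nat.sInf_mem ⟨X.length, show X.length ∈ {p | IsPeriod X p} from period_len X hX⟩

lemma per_le {α : Type*} {X : List α} {p : ℕ} (h : IsPeriod X p) : per X ≤ p :=
  Nat.sInf_le h

lemma period_sub {α : Type*} {X : List α} {p q : ℕ} (hpq : p < q) (hq : p + q ≤ X.length)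
    (hp : IsPeriod X p) (hq' : IsPeriod X q) : IsPeriod X (q - p) := by
  refine ⟨by omega, fun i hi => ?_⟩
  by_cases h : i + q < X.length
  · have h1 := hp.2 (i + (q - p)) (by omega)
    have h2 := hq'.2 i h
    rw [show i + (q - p) + p = i + q by omega] at h1
    rw [h2, h1]
  · have hip : p ≤ i := by omega
    have h1 := hp.2 (i - p) (by omega)
    have h2 := hq'.2 (i - p) (by omega)
    rw [show i - p + p = i by omega] at h1
    rw [show i - p + q = i + (q - p) by omega] at h2
    rw [← h1, h2]

lemma fine_wilf {α : Type*} {X : List α} :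
    ∀ n p q, p + q ≤ n → p + q ≤ X.length → IsPeriod X p → IsPeriod X q →
      IsPeriod X (Nat.gcd p q) := by
  intro n
  induction n with
  | zero => intro p q h _ hp _; exact absurd hp.1 (by omega)
  | succ n ih =>
    intro p q hn hlen hp hq
    have hp1 := hp.1
    have hq1 := hq.1
    rcases lt_trichotomy p q with h | h | h
    · have hsub : IsPeriod X (q - p) := period_sub h hlen hp hq
      have : Nat.gcd p (q - p) = Nat.gcd p q := by
        rw [Nat.gcd_comm p (q-p), Nat.gcd_comm p q, Nat.gcd_sub_self_left (le_of_lt h)]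
      rw [← this]
      exact ih p (q - p) (by omega) (by omega) hp hsub
    · subst h; rwa [Nat.gcd_self]
    · have hsub : IsPeriod X (p - q) := period_sub h (by omega) hq hp
      have : Nat.gcd (p - q) q = Nat.gcd p q := Nat.gcd_sub_self_left (le_of_lt h)
      rw [← this]
      exact ih (p - q) q (by omega) (by omega) hsub hq

lemma occ_diff_period {α : Type*} {P T : List α} {a b : ℕ} (hP : P ≠ [])
    (ha : a ∈ Occ P T) (hb : b ∈ Occ P T) (hab : a < b) : IsPeriod P (b - a) := by
  rw [occ_iff P T hP] at ha hb
  refine ⟨by omega, fun i hi => ?_⟩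
  have h1 := hb.2 i (by omega)
  have h2 := ha.2 (i + (b - a)) hi
  rw [show a + (i + (b - a)) = b + i by omega] at h2
  rw [← h1, ← h2]

lemma period_mul {α : Type*} {X : List α} {p : ℕ} (h : IsPeriod X p) :
    ∀ t i, i + t * p < X.length → X[i]? = X[i + t * p]? := by
  intro t
  induction t with
  | zero => simp
  | succ t ih =>
    intro i hi
    rw [Nat.succ_mul] at hi ⊢
    have h1 := h.2 i (by omega)
    rw [h1, show i + (t * p + p) = i + p + t * p by omega]
    exact ih (i + p) (by omega)

lemma period_dvd_eq {α : Type*} {X : List α} {p s i : ℕ} (h : IsPeriod X p) (hd : p ∣ s)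
    (hi : i + s < X.length) : X[i]? = X[i + s]? := by
  obtain ⟨t, rfl⟩ := hd
  rw [mul_comm] at hi ⊢
  exact period_mul h t i hi

lemma mid_occ {α : Type*} {P T : List α} {a b s p : ℕ} (hP : P ≠ [])
    (ha : a ∈ Occ P T) (hb : b ∈ Occ P T) (hp : IsPeriod P p)
    (hdab : p ∣ b - a) (hds : p ∣ s) (hs : s ≤ b - a) (hba : b - a ≤ P.length)
    (hab : a ≤ b) : a + s ∈ Occ P T := by
  rw [occ_iff P T hP] at ha hb ⊢
  refine ⟨by omega, fun i hi => ?_⟩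
  by_cases h : s + i < P.length
  · have h1 := ha.2 (s + i) h
    have h2 := period_dvd_eq hp hds (show i + s < P.length by omega)
    rw [show a + s + i = a + (s + i) by omega, h1, show s + i = i + s by omega]
    exact h2.symm
  · -- use occurrence at b
    have hd : b - (a + s) ≤ i := by omega
    have h1 := hb.2 (i - (b - (a + s))) (by omega)
    have hdvd : p ∣ b - (a + s) := by
      have h3 := Nat.dvd_sub hdab hds
      rwa [show b - a - s = b - (a + s) by omega] at h3
    have h2 := period_dvd_eq hp hdvd (show (i - (b - (a + s))) + (b - (a + s)) < P.length by omega)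
    rw [show b + (i - (b - (a + s))) = a + s + i by omega] at h1
    rw [h1, h2]
    congr 1; omega

theorem stmt6 {α : Type*} (P T : List α) (hP : P ≠ [])
    (hT : 2 * T.length ≤ 3 * P.length) :
    ∃ a m : ℕ, Occ P T = {x | ∃ t < m, x = a + t * per P} := by
  rcases Set.eq_empty_or_nonempty (Occ P T) with he | hne
  · exact ⟨0, 0, by simp [he]⟩
  have hbdd : BddAbove (Occ P T) := by
    refine ⟨T.length, fun ℓ hℓ => ?_⟩
    rw [occ_iff P T hP] at hℓ; omega
  set p := per P with hpdef
  have hpper : IsPeriod P p := per_isPeriod P hP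
  have hppos : 0 < p := hpper.1
  set a := sInf (Occ P T) with hadef
  set b := sSup (Occ P T) with hbdef
  have ha : a ∈ Occ P T := Nat.sInf_mem hne
  have hb : b ∈ Occ P T := Nat.sSup_mem hne hbdd
  have hmin : ∀ ℓ ∈ Occ P T, a ≤ ℓ := fun ℓ h => Nat.sInf_le h
  have hmax : ∀ ℓ ∈ Occ P T, ℓ ≤ b := fun ℓ h => le_csSup hbdd h
  -- every occurrence ℓ satisfies 2*ℓ ≤ P.length
  have hocc_le : ∀ ℓ ∈ Occ P T, 2 * ℓ ≤ P.length := by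
    intro ℓ h; rw [occ_iff P T hP] at h; omega
  -- difference of occurrences divisible by p
  have hdvd : ∀ ℓ ∈ Occ P T, ∀ ℓ' ∈ Occ P T, ℓ ≤ ℓ' → p ∣ ℓ' - ℓ := by
    intro ℓ h ℓ' h' hle
    rcases eq_or_lt_of_le hle with rfl | hlt
    · simp
    have hper : IsPeriod P (ℓ' - ℓ) := occ_diff_period hP h h' hlt
    have hple : p ≤ ℓ' - ℓ := per_le hper
    have h2 : 2 * ℓ' ≤ P.length := hocc_le ℓ' h'
    have hg : IsPeriod P (Nat.gcd p (ℓ' - ℓ)) :=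
      fine_wilf (p + (ℓ' - ℓ)) p (ℓ' - ℓ) le_rfl (by omega) hpper hper
    have hg1 : p ≤ Nat.gcd p (ℓ' - ℓ) := per_le hg
    have hg2 : Nat.gcd p (ℓ' - ℓ) ∣ p := Nat.gcd_dvd_left _ _
    have : Nat.gcd p (ℓ' - ℓ) = p := Nat.le_antisymm (Nat.le_of_dvd hppos hg2) hg1
    rw [← this]; exact Nat.gcd_dvd_right _ _
  have hdab : p ∣ b - a := hdvd a ha b hb (hmin b hb)
  have hba_le : b - a ≤ P.length := by have := hocc_le b hb; omega
  refine ⟨a, (b - a) / p + 1, ?_⟩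
  ext x
  simp only [Set.mem_setOf_eq]
  constructor
  · intro hx
    have hax : a ≤ x := hmin x hx
    have hxb : x ≤ b := hmax x hx
    have hdx : p ∣ x - a := hdvd a ha x hx hax
    refine ⟨(x - a) / p, ?_, ?_⟩
    · have : (x - a) / p ≤ (b - a) / p := Nat.div_le_div_right (by omega)
      omega
    · rw [Nat.div_mul_cancel hdx]; omega
  · rintro ⟨t, ht, rfl⟩
    have hs : t * p ≤ b - a := by
      have h1 : t ≤ (b - a) / p := by omega
      calc t * p ≤ (b - a) / p * p := Nat.mul_le_mul_right p h1
        _ = b - a := Nat.div_mul_cancel hdab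
    exact mid_occ hP ha hb hpper hdab ⟨t, mul_comm t p⟩ hs hba_le (hmin b hb)
end
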